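/- Let 1 ≤ p < ∞, K ≥ 1, and θ > 0. Define the restricted trilinear operator N₁ acting on sequences a, b, c ∈ ℓ^p(ℤ) by N₁(a,b,c)(n) = ∑ a(n1)·conj(b(n2))·c(n3), the sum being over n = n1 - n2 + n3 with n1, n3 ≠ n and |2(n - n1)(n - n3)| ≤ (3K)^θ. Then ‖N₁(a,b,c)‖_{ℓ^p} ≲ K^{2θ/p'} ‖a‖_{ℓ^p}‖b‖_{ℓ^p}‖c‖_{ℓ^p}, where 1/p + 1/p' = 1. -/
import Mathlib

/-- Jensen-type inequality: `(∑ g)^p ≤ card^(p-1) * ∑ g^p` for `p ≥ 1`. -/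
private lemma sum_rpow_le_card_rpow {ι : Type*} (t : Finset ι) (g : ι → ℝ)
    (hg : ∀ i ∈ t, 0 ≤ g i) {p : ℝ} (hp : 1 ≤ p) :
    (∑ i ∈ t, g i) ^ p ≤ (t.card : ℝ) ^ (p - 1) * ∑ i ∈ t, g i ^ p := by
  rcases t.eq_empty_or_nonempty with rfl | ht
  · simp [Real.zero_rpow (by linarith : p ≠ 0)]
  · have hc : (0:ℝ) < t.card := by exact_mod_cast Finset.card_pos.mpr ht
    have h := Real.rpow_arith_mean_le_arith_mean_rpow t (fun _ => ((t.card : ℝ))⁻¹) g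
      (fun i _ => by positivity)
      (by rw [Finset.sum_const, nsmul_eq_mul, mul_inv_cancel₀ hc.ne'])
      hg hp
    rw [← Finset.mul_sum, ← Finset.mul_sum,
      Real.mul_rpow (by positivity) (Finset.sum_nonneg hg)] at h
    calc (∑ i ∈ t, g i) ^ p
        = (t.card : ℝ) ^ p * (((t.card : ℝ))⁻¹ ^ p * (∑ i ∈ t, g i) ^ p) := by
          rw [← mul_assoc, ← Real.mul_rpow hc.le (by positivity),
            mul_inv_cancel₀ hc.ne', Real.one_rpow, one_mul]
      _ ≤ (t.card : ℝ) ^ p * (((t.card : ℝ))⁻¹ * ∑ i ∈ t, g i ^ p) :=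
          mul_le_mul_of_nonneg_left h (Real.rpow_nonneg hc.le p)
      _ = (t.card : ℝ) ^ (p - 1) * ∑ i ∈ t, g i ^ p := by
          rw [Real.rpow_sub hc, Real.rpow_one, div_eq_mul_inv]; ring

/-- Bound for the modulation-restricted trilinear operator `N₁`:
`N₁(a,b,c)(n) = ∑_{n = n₁-n₂+n₃, n₁,n₃ ≠ n, |2(n-n₁)(n-n₃)| ≤ (3K)^θ} a(n₁) conj(b(n₂)) c(n₃)`
satisfies `‖N₁(a,b,c)‖_{ℓ^p} ≲ K^{2θ/p'} ‖a‖_{ℓ^p}‖b‖_{ℓ^p}‖c‖_{ℓ^p}`, where `1/p' = 1 - 1/p`. -/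
theorem restricted_trilinear_bound (p θ : ℝ) (hp : 1 ≤ p) (hθ : 0 < θ) :
    ∃ C > (0:ℝ), ∀ K : ℝ, 1 ≤ K → ∀ a b c : ℤ → ℂ,
      Summable (fun n => ‖a n‖ ^ p) → Summable (fun n => ‖b n‖ ^ p) →
      Summable (fun n => ‖c n‖ ^ p) →
      (∑' n : ℤ, ‖∑' m : ℤ × ℤ,
          (if m.1 ≠ n ∧ m.2 ≠ n ∧ |2 * ((n:ℝ) - (m.1:ℝ)) * ((n:ℝ) - (m.2:ℝ))| ≤ (3 * K) ^ θ
            then a m.1 * (starRingEnd ℂ) (b (m.1 + m.2 - n)) * c m.2 else 0)‖ ^ p) ^ (1/p)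
        ≤ C * K ^ (2 * θ * (1 - 1/p)) *
          ((∑' n, ‖a n‖ ^ p) ^ (1/p) * (∑' n, ‖b n‖ ^ p) ^ (1/p) *
            (∑' n, ‖c n‖ ^ p) ^ (1/p)) := by
  classical
  have h3 : (1:ℝ) ≤ 3 ^ (2 * θ) := Real.one_le_rpow (by norm_num) (by linarith)
  refine ⟨36 * 3 ^ (2 * θ), by positivity, ?_⟩
  intro K hK a b c ha hb hc
  have hp0 : (0:ℝ) < p := by linarith
  set c₂ : ℝ := 36 * 3 ^ (2 * θ) with hc₂
  have hc₂1 : (1:ℝ) ≤ c₂ := by rw [hc₂]; nlinarith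
  set f : ℤ → ℝ := fun i => ‖a i‖ ^ p with hf
  set g : ℤ → ℝ := fun i => ‖b i‖ ^ p with hg
  set h : ℤ → ℝ := fun i => ‖c i‖ ^ p with hh
  have hf0 : ∀ i, 0 ≤ f i := fun i => Real.rpow_nonneg (norm_nonneg _) p
  have hg0 : ∀ i, 0 ≤ g i := fun i => Real.rpow_nonneg (norm_nonneg _) p
  have hh0 : ∀ i, 0 ≤ h i := fun i => Real.rpow_nonneg (norm_nonneg _) p
  have hA0 : 0 ≤ ∑' n, f n := tsum_nonneg hf0
  have hB0 : 0 ≤ ∑' n, g n := tsum_nonneg hg0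
  have hC0 : 0 ≤ ∑' n, h n := tsum_nonneg hh0
  have hRHS0 : 0 ≤ c₂ * K ^ (2 * θ * (1 - 1/p)) *
      ((∑' n, f n) ^ (1/p) * (∑' n, g n) ^ (1/p) * (∑' n, h n) ^ (1/p)) := by
    have := Real.rpow_nonneg hA0 (1/p)
    have := Real.rpow_nonneg hB0 (1/p)
    have := Real.rpow_nonneg hC0 (1/p)
    have hc₂0 : (0:ℝ) ≤ c₂ := by linarith
    have hK0 : (0:ℝ) ≤ K ^ (2 * θ * (1 - 1/p)) :=
      Real.rpow_nonneg (by linarith) _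
    positivity
  set M : ℝ := (3 * K) ^ θ with hM
  have h3K : (0:ℝ) ≤ 3 * K := by linarith
  have hM1 : (1:ℝ) ≤ M := Real.one_le_rpow (by linarith) hθ.le
  set L : ℤ := ⌈M⌉ with hLdef
  have hML : M ≤ (L:ℝ) := Int.le_ceil M
  have hL1 : (1:ℤ) ≤ L := by
    have : (1:ℝ) ≤ (L:ℝ) := le_trans hM1 hML
    exact_mod_cast this
  have hL2M : (L:ℝ) ≤ 2 * M := by
    have := Int.ceil_lt_add_one M
    have : (L:ℝ) < M + 1 := by exact_mod_cast this
    linarith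
  set S : ℤ → Finset (ℤ × ℤ) := fun n =>
    (Finset.Icc (n - L) (n + L) ×ˢ Finset.Icc (n - L) (n + L)).filter
      (fun m => m.1 ≠ n ∧ m.2 ≠ n ∧ |2 * ((n:ℝ) - (m.1:ℝ)) * ((n:ℝ) - (m.2:ℝ))| ≤ M)
    with hS
  -- the condition forces membership in S n
  have hmem : ∀ n : ℤ, ∀ m : ℤ × ℤ,
      (m.1 ≠ n ∧ m.2 ≠ n ∧ |2 * ((n:ℝ) - (m.1:ℝ)) * ((n:ℝ) - (m.2:ℝ))| ≤ M) → m ∈ S n := by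
    intro n m hcond
    obtain ⟨h1, h2, h3'⟩ := hcond
    have e1 : (1:ℝ) ≤ |(n:ℝ) - (m.1:ℝ)| := by
      have h' : (1:ℤ) ≤ |n - m.1| := Int.one_le_abs (sub_ne_zero.mpr (Ne.symm h1))
      exact_mod_cast h'
    have e2 : (1:ℝ) ≤ |(n:ℝ) - (m.2:ℝ)| := by
      have h' : (1:ℤ) ≤ |n - m.2| := Int.one_le_abs (sub_ne_zero.mpr (Ne.symm h2))
      exact_mod_cast h' 
    have habs : |2 * ((n:ℝ) - (m.1:ℝ)) * ((n:ℝ) - (m.2:ℝ))|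
        = 2 * |(n:ℝ) - (m.1:ℝ)| * |(n:ℝ) - (m.2:ℝ)| := by
      rw [abs_mul, abs_mul, abs_two]
    rw [habs] at h3'
    have f1 : |(n:ℝ) - (m.1:ℝ)| ≤ M := by nlinarith [abs_nonneg ((n:ℝ) - (m.1:ℝ)), abs_nonneg ((n:ℝ) - (m.2:ℝ))]
    have f2 : |(n:ℝ) - (m.2:ℝ)| ≤ M := by nlinarith [abs_nonneg ((n:ℝ) - (m.1:ℝ)), abs_nonneg ((n:ℝ) - (m.2:ℝ))]
    have g1 : |n - m.1| ≤ L := by exact_mod_cast f1.trans hML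
    have g2 : |n - m.2| ≤ L := by exact_mod_cast f2.trans hML
    rw [hS]
    refine Finset.mem_filter.mpr ⟨Finset.mem_product.mpr ⟨?_, ?_⟩, h1, h2, habs.trans_le h3'⟩
    · rw [Finset.mem_Icc]
      rcases abs_le.mp g1 with ⟨u, v⟩; omega
    · rw [Finset.mem_Icc]
      rcases abs_le.mp g2 with ⟨u, v⟩; omega
  -- cardinality bound
  have hcard : ∀ n : ℤ, ((S n).card : ℝ) ≤ c₂ * K ^ (2 * θ) := by
    intro n
    have h1 : (S n).card ≤ ((2 * L + 1).toNat) ^ 2 := by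
      refine le_trans (Finset.card_filter_le _ _) ?_
      rw [Finset.card_product, Int.card_Icc]
      have : n + L + 1 - (n - L) = 2 * L + 1 := by ring
      rw [this, sq]
    have h2 : (((2 * L + 1).toNat : ℤ) : ℝ) = 2 * (L:ℝ) + 1 := by
      rw [Int.toNat_of_nonneg (by omega)]; push_cast; ring
    have h2' : (((2 * L + 1).toNat) : ℝ) = 2 * (L:ℝ) + 1 := by
      exact_mod_cast h2
    have hMsq : M ^ 2 = 3 ^ (2 * θ) * K ^ (2 * θ) := by
      rw [hM, ← Real.rpow_natCast ((3 * K) ^ θ) 2, ← Real.rpow_mul h3K,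
        Real.mul_rpow (by norm_num) (by linarith)]
      norm_num [mul_comm]
    have hL0 : (0:ℝ) ≤ (L:ℝ) := by exact_mod_cast hL1.trans' (by norm_num)
    calc ((S n).card : ℝ) ≤ ((((2 * L + 1).toNat) ^ 2 : ℕ) : ℝ) := by exact_mod_cast h1
      _ = (2 * (L:ℝ) + 1) ^ 2 := by push_cast [h2']; ring
      _ ≤ 36 * M ^ 2 := by nlinarith
      _ = c₂ * K ^ (2 * θ) := by rw [hMsq, hc₂]; ring
  -- inner tsum is a finite sum
  have hTsum : ∀ n : ℤ, (∑' m : ℤ × ℤ,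
      (if m.1 ≠ n ∧ m.2 ≠ n ∧ |2 * ((n:ℝ) - (m.1:ℝ)) * ((n:ℝ) - (m.2:ℝ))| ≤ M
        then a m.1 * (starRingEnd ℂ) (b (m.1 + m.2 - n)) * c m.2 else 0))
      = ∑ m ∈ S n,
      (if m.1 ≠ n ∧ m.2 ≠ n ∧ |2 * ((n:ℝ) - (m.1:ℝ)) * ((n:ℝ) - (m.2:ℝ))| ≤ M
        then a m.1 * (starRingEnd ℂ) (b (m.1 + m.2 - n)) * c m.2 else 0) := by
    intro n
    refine tsum_eq_sum ?_
    intro m hm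
    rw [if_neg]
    intro hcond
    exact hm (hmem n m hcond)
  -- notation for the summand and key pointwise bound
  set u : ℤ → ℤ × ℤ → ℝ := fun n m => f m.1 * (g (m.1 + m.2 - n) * h m.2) with hu
  set W : ℤ → ℝ := fun n => ∑ m ∈ S n, u n m with hW
  have hu0 : ∀ n m, 0 ≤ u n m := fun n m =>
    mul_nonneg (hf0 _) (mul_nonneg (hg0 _) (hh0 _))
  have hW0 : ∀ n, 0 ≤ W n := fun n => Finset.sum_nonneg fun m _ => hu0 n m
  set E : ℝ := (c₂ * K ^ (2 * θ)) ^ (p - 1) with hE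
  have hcK : (0:ℝ) < c₂ * K ^ (2 * θ) := by
    have : (0:ℝ) < K ^ (2 * θ) := Real.rpow_pos_of_pos (by linarith) _
    nlinarith
  have hE0 : 0 ≤ E := Real.rpow_nonneg hcK.le _
  have hpoint : ∀ n : ℤ,
      ‖∑' m : ℤ × ℤ,
        (if m.1 ≠ n ∧ m.2 ≠ n ∧ |2 * ((n:ℝ) - (m.1:ℝ)) * ((n:ℝ) - (m.2:ℝ))| ≤ M
          then a m.1 * (starRingEnd ℂ) (b (m.1 + m.2 - n)) * c m.2 else 0)‖ ^ p
      ≤ E * W n := by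
    intro n
    rw [hTsum n]
    have step1 : ‖∑ m ∈ S n,
        (if m.1 ≠ n ∧ m.2 ≠ n ∧ |2 * ((n:ℝ) - (m.1:ℝ)) * ((n:ℝ) - (m.2:ℝ))| ≤ M
          then a m.1 * (starRingEnd ℂ) (b (m.1 + m.2 - n)) * c m.2 else 0)‖ ^ p
        ≤ (∑ m ∈ S n, ‖(if m.1 ≠ n ∧ m.2 ≠ n ∧ |2 * ((n:ℝ) - (m.1:ℝ)) * ((n:ℝ) - (m.2:ℝ))| ≤ M
          then a m.1 * (starRingEnd ℂ) (b (m.1 + m.2 - n)) * c m.2 else 0)‖) ^ p :=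
      Real.rpow_le_rpow (norm_nonneg _) (norm_sum_le _ _) hp0.le
    have step2 := sum_rpow_le_card_rpow (S n)
      (fun m => ‖(if m.1 ≠ n ∧ m.2 ≠ n ∧ |2 * ((n:ℝ) - (m.1:ℝ)) * ((n:ℝ) - (m.2:ℝ))| ≤ M
          then a m.1 * (starRingEnd ℂ) (b (m.1 + m.2 - n)) * c m.2 else 0)‖)
      (fun m _ => norm_nonneg _) hp
    have step3 : ∑ m ∈ S n, ‖(if m.1 ≠ n ∧ m.2 ≠ n ∧
          |2 * ((n:ℝ) - (m.1:ℝ)) * ((n:ℝ) - (m.2:ℝ))| ≤ M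
          then a m.1 * (starRingEnd ℂ) (b (m.1 + m.2 - n)) * c m.2 else 0)‖ ^ p ≤ W n := by
      refine Finset.sum_le_sum fun m _ => ?_
      by_cases hcond : m.1 ≠ n ∧ m.2 ≠ n ∧ |2 * ((n:ℝ) - (m.1:ℝ)) * ((n:ℝ) - (m.2:ℝ))| ≤ M
      · rw [if_pos hcond, norm_mul, norm_mul, RCLike.norm_conj,
          Real.mul_rpow (by positivity) (norm_nonneg _),
          Real.mul_rpow (norm_nonneg _) (norm_nonneg _)]
        rw [hu]; ring_nf; exact le_of_eq (by ring)
      · rw [if_neg hcond, norm_zero, Real.zero_rpow hp0.ne']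
        exact hu0 n m
    have step4 : ((S n).card : ℝ) ^ (p - 1) ≤ E := by
      rw [hE]
      exact Real.rpow_le_rpow (Nat.cast_nonneg _) (hcard n) (by linarith)
    calc ‖∑ m ∈ S n, _‖ ^ p ≤ _ := step1
      _ ≤ ((S n).card : ℝ) ^ (p - 1) * ∑ m ∈ S n, ‖(if m.1 ≠ n ∧ m.2 ≠ n ∧
            |2 * ((n:ℝ) - (m.1:ℝ)) * ((n:ℝ) - (m.2:ℝ))| ≤ M
            then a m.1 * (starRingEnd ℂ) (b (m.1 + m.2 - n)) * c m.2 else 0)‖ ^ p := step2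
      _ ≤ ((S n).card : ℝ) ^ (p - 1) * W n :=
          mul_le_mul_of_nonneg_left step3 (Real.rpow_nonneg (Nat.cast_nonneg _) _)
      _ ≤ E * W n := mul_le_mul_of_nonneg_right step4 (hW0 n)
  -- partial-sum bound for the triple sums
  have hpartial : ∀ s : Finset ℤ, ∑ n ∈ s, W n ≤ (∑' n, f n) * ((∑' n, g n) * (∑' n, h n)) := by
    intro s
    set e : (Σ _ : ℤ, ℤ × ℤ) → ℤ × ℤ × ℤ := fun x => (x.2.1, x.2.1 + x.2.2 - x.1, x.2.2) with he
    have hinj : Function.Injective e := by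
      intro x y hxy
      rcases x with ⟨n, i, k⟩
      rcases y with ⟨n', i', k'⟩
      simp only [he, Prod.mk.injEq] at hxy
      obtain ⟨h1, h2, h3'⟩ := hxy
      subst h1; subst h3'
      have : n = n' := by omega
      subst this; rfl
    set G : ℤ × ℤ × ℤ → ℝ := fun y => f y.1 * (g y.2.1 * h y.2.2) with hG
    have hG0 : ∀ y, 0 ≤ G y := fun y => mul_nonneg (hf0 _) (mul_nonneg (hg0 _) (hh0 _))
    have h1 : ∑ n ∈ s, W n = ∑ x ∈ s.sigma S, u x.1 x.2 := by
      rw [Finset.sum_sigma]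
    have h2 : ∑ x ∈ s.sigma S, u x.1 x.2 = ∑ y ∈ (s.sigma S).image e, G y := by
      rw [Finset.sum_image (fun x _ y _ hxy => hinj hxy)]
    set P : Finset (ℤ × ℤ × ℤ) := (s.sigma S).image e with hP
    set U : Finset ℤ := P.image (fun y => y.1) with hU
    set V : Finset ℤ := P.image (fun y => y.2.1) with hV
    set Wf : Finset ℤ := P.image (fun y => y.2.2) with hWf
    have hsub : P ⊆ U ×ˢ (V ×ˢ Wf) := by
      intro y hy
      simp only [hU, hV, hWf, Finset.mem_product, Finset.mem_image]
      exact ⟨⟨y, hy, rfl⟩, ⟨y, hy, rfl⟩, ⟨y, hy, rfl⟩⟩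
    have h3 : ∑ y ∈ P, G y ≤ ∑ y ∈ U ×ˢ (V ×ˢ Wf), G y :=
      Finset.sum_le_sum_of_subset_of_nonneg hsub (fun y _ _ => hG0 y)
    have h4 : ∑ y ∈ U ×ˢ (V ×ˢ Wf), G y
        = (∑ i ∈ U, f i) * ((∑ j ∈ V, g j) * (∑ k ∈ Wf, h k)) := by
      rw [Finset.sum_mul_sum, Finset.sum_mul_sum, Finset.sum_product]
      refine Finset.sum_congr rfl fun i _ => ?_
      rw [Finset.sum_product]
      simp [hG, Finset.mul_sum, mul_assoc]
    have h5 : (∑ i ∈ U, f i) * ((∑ j ∈ V, g j) * (∑ k ∈ Wf, h k))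
        ≤ (∑' n, f n) * ((∑' n, g n) * (∑' n, h n)) := by
      have e1 : ∑ i ∈ U, f i ≤ ∑' n, f n := Summable.sum_le_tsum U (fun i _ => hf0 i) ha
      have e2 : ∑ j ∈ V, g j ≤ ∑' n, g n := Summable.sum_le_tsum V (fun i _ => hg0 i) hb
      have e3 : ∑ k ∈ Wf, h k ≤ ∑' n, h n := Summable.sum_le_tsum Wf (fun i _ => hh0 i) hc
      have n1 : 0 ≤ ∑ i ∈ U, f i := Finset.sum_nonneg fun i _ => hf0 i
      have n2 : 0 ≤ ∑ j ∈ V, g j := Finset.sum_nonneg fun i _ => hg0 i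
      have n3 : 0 ≤ ∑ k ∈ Wf, h k := Finset.sum_nonneg fun i _ => hh0 i
      exact mul_le_mul e1 (mul_le_mul e2 e3 n3 hB0) (mul_nonneg n2 n3) hA0
    calc ∑ n ∈ s, W n = ∑ y ∈ P, G y := by rw [h1, h2]
      _ ≤ _ := h3
      _ = _ := h4
      _ ≤ _ := h5
  -- main tsum bound
  set F : ℤ → ℝ := fun n =>
      ‖∑' m : ℤ × ℤ,
        (if m.1 ≠ n ∧ m.2 ≠ n ∧ |2 * ((n:ℝ) - (m.1:ℝ)) * ((n:ℝ) - (m.2:ℝ))| ≤ M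
          then a m.1 * (starRingEnd ℂ) (b (m.1 + m.2 - n)) * c m.2 else 0)‖ ^ p with hF
  have hF0 : ∀ n, 0 ≤ F n := fun n => Real.rpow_nonneg (norm_nonneg _) p
  have hgoal : (∑' n, F n) ^ (1/p)
      ≤ c₂ * K ^ (2 * θ * (1 - 1/p)) *
        ((∑' n, f n) ^ (1/p) * (∑' n, g n) ^ (1/p) * (∑' n, h n) ^ (1/p)) := by
    by_cases hsumF : Summable F
    · have key : ∑' n, F n ≤ E * ((∑' n, f n) * ((∑' n, g n) * (∑' n, h n))) := by
        refine Summable.tsum_le_of_sum_le hsumF ?_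
        intro s
        calc ∑ n ∈ s, F n ≤ ∑ n ∈ s, E * W n :=
              Finset.sum_le_sum fun n _ => hpoint n
          _ = E * ∑ n ∈ s, W n := by rw [Finset.mul_sum]
          _ ≤ E * ((∑' n, f n) * ((∑' n, g n) * (∑' n, h n))) :=
              mul_le_mul_of_nonneg_left (hpartial s) hE0
      have hL0 : 0 ≤ ∑' n, F n := tsum_nonneg hF0
      have step : (∑' n, F n) ^ (1/p)
          ≤ (E * ((∑' n, f n) * ((∑' n, g n) * (∑' n, h n)))) ^ (1/p) :=
        Real.rpow_le_rpow hL0 key (by positivity)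
      refine step.trans ?_
      have expand : (E * ((∑' n, f n) * ((∑' n, g n) * (∑' n, h n)))) ^ (1/p)
          = E ^ (1/p) * ((∑' n, f n) ^ (1/p) * ((∑' n, g n) ^ (1/p) * (∑' n, h n) ^ (1/p))) := by
        rw [Real.mul_rpow hE0 (mul_nonneg hA0 (mul_nonneg hB0 hC0)),
          Real.mul_rpow hA0 (mul_nonneg hB0 hC0), Real.mul_rpow hB0 hC0]
      rw [expand]
      have hEval : E ^ (1/p) = c₂ ^ (1 - 1/p) * K ^ (2 * θ * (1 - 1/p)) := by
        rw [hE, ← Real.rpow_mul hcK.le]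
        have : (p - 1) * (1/p) = 1 - 1/p := by field_simp
        rw [this, Real.mul_rpow (by linarith) (Real.rpow_nonneg (by linarith) _),
          ← Real.rpow_mul (by linarith : (0:ℝ) ≤ K)]
      have hc₂le : c₂ ^ (1 - 1/p) ≤ c₂ := by
        have h1p : 1/p ≤ 1 := by
          rw [div_le_one hp0]; exact hp
        have : c₂ ^ (1 - 1/p) ≤ c₂ ^ (1:ℝ) :=
          Real.rpow_le_rpow_of_exponent_le hc₂1 (by
            have : 0 < 1/p := by positivity
            linarith)
        rwa [Real.rpow_one] at this
      have hKpos : 0 ≤ K ^ (2 * θ * (1 - 1/p)) := Real.rpow_nonneg (by linarith) _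
      have hrest : 0 ≤ (∑' n, f n) ^ (1/p) * ((∑' n, g n) ^ (1/p) * (∑' n, h n) ^ (1/p)) := by
        have := Real.rpow_nonneg hA0 (1/p)
        have := Real.rpow_nonneg hB0 (1/p)
        have := Real.rpow_nonneg hC0 (1/p)
        positivity
      calc E ^ (1/p) * ((∑' n, f n) ^ (1/p) * ((∑' n, g n) ^ (1/p) * (∑' n, h n) ^ (1/p)))
          = c₂ ^ (1 - 1/p) * K ^ (2 * θ * (1 - 1/p)) *
            ((∑' n, f n) ^ (1/p) * ((∑' n, g n) ^ (1/p) * (∑' n, h n) ^ (1/p))) := by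
            rw [hEval]
        _ ≤ c₂ * K ^ (2 * θ * (1 - 1/p)) *
            ((∑' n, f n) ^ (1/p) * ((∑' n, g n) ^ (1/p) * (∑' n, h n) ^ (1/p))) := by
            refine mul_le_mul_of_nonneg_right ?_ hrest
            exact mul_le_mul_of_nonneg_right hc₂le hKpos
        _ = c₂ * K ^ (2 * θ * (1 - 1/p)) *
            ((∑' n, f n) ^ (1/p) * (∑' n, g n) ^ (1/p) * (∑' n, h n) ^ (1/p)) := by ring
    · rw [tsum_eq_zero_of_not_summable hsumF, Real.zero_rpow (by positivity : (1/p) ≠ 0)]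
      exact hRHS0
  exact hgoal
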